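/- arXiv:2011.14110 — 2 statements merged into one kernel-verified Lean document; each statement's English description precedes it below -/
import Mathlib

section
/- Let f : [0,∞) → [0,∞) be amenable. Then f is (P)-preserving (i.e., for every semimetric space (X,d) satisfying the K-relaxed polygonal inequality for some K ≥ 1, the function f∘d is a semimetric and (X, f∘d) satisfies the K′-relaxed polygonal inequality for some K′ ≥ 1) if and only if for every K₁ ≥ 1 there exists K₂ ≥ 1 such that for every n ∈ ℕ and all a₁, …, aₙ ∈ [0,∞) with (1+K₁)·max{a_i : i ≤ n} ≤ K₁·∑_{i=1}^{n} a_i, one has (1+K₂)·max{f(a_i) : i ≤ n} ≤ K₂·∑_{i=1}^{n} f(a_i); equivalently, f maps every K₁-relaxed polygon to a K₂-relaxed polygon (up to rearrangement). -/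
/-- A semimetric on a set `X`: nonnegative, vanishing exactly on the diagonal, symmetric. -/
def IsSemimetricOn {α : Type} (X : Set α) (d : α → α → ℝ) : Prop :=
  (∀ x ∈ X, ∀ y ∈ X, 0 ≤ d x y) ∧
  (∀ x ∈ X, ∀ y ∈ X, (d x y = 0 ↔ x = y)) ∧
  (∀ x ∈ X, ∀ y ∈ X, d x y = d y x)

/-- A strong b-metric on `X` with relaxation constant `K`. -/
def IsStrongBMetricOn {α : Type} (X : Set α) (d : α → α → ℝ) (K : ℝ) : Prop :=
  IsSemimetricOn X d ∧ 1 ≤ K ∧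
    ∀ x ∈ X, ∀ y ∈ X, ∀ z ∈ X, d x z ≤ K * d x y + d y z

/-- A b-metric on `X` with relaxation constant `K`. -/
def IsBMetricOn {α : Type} (X : Set α) (d : α → α → ℝ) (K : ℝ) : Prop :=
  IsSemimetricOn X d ∧ 1 ≤ K ∧
    ∀ x ∈ X, ∀ y ∈ X, ∀ z ∈ X, d x z ≤ K * (d x y + d y z)

/-- A metric on `X`. -/
def IsMetricOn {α : Type} (X : Set α) (d : α → α → ℝ) : Prop :=
  IsSemimetricOn X d ∧
    ∀ x ∈ X, ∀ y ∈ X, ∀ z ∈ X, d x z ≤ d x y + d y z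

/-- The set of distances realized on `X`; its `sSup` is the diameter. -/
def distSet {α : Type} (X : Set α) (d : α → α → ℝ) : Set ℝ :=
  {r : ℝ | ∃ x ∈ X, ∃ y ∈ X, d x y = r}

/-- `(X, d)` satisfies the `K`-relaxed polygonal inequality. -/
def SatisfiesRPI {α : Type} (X : Set α) (d : α → α → ℝ) (K : ℝ) : Prop :=
  ∀ n : ℕ, ∀ x : ℕ → α, (∀ i ≤ n, x i ∈ X) →
    d (x 0) (x n) ≤ K * ∑ i ∈ Finset.range n, d (x i) (x (i + 1))

/-- `(a,b,c)` with `a ≥ b ≥ c ≥ 0` is a `K`-triangle triplet: `a ≤ K (b + c)`. -/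
def IsTriangleTriplet (K a b c : ℝ) : Prop :=
  b ≤ a ∧ c ≤ b ∧ 0 ≤ c ∧ a ≤ K * (b + c)

/-- `(a,b,c)` with `a ≥ b ≥ c ≥ 0` is a strong `K`-triangle triplet: `a ≤ K c + b`. -/
def IsStrongTriangleTriplet (K a b c : ℝ) : Prop :=
  b ≤ a ∧ c ≤ b ∧ 0 ≤ c ∧ a ≤ K * c + b

/-- The values `x, y, z` can be arranged into a `K`-triangle triplet. -/
def FormsTriangleTriplet (K x y z : ℝ) : Prop :=
  ∃ a b c : ℝ, ({a, b, c} : Multiset ℝ) = ({x, y, z} : Multiset ℝ) ∧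
    IsTriangleTriplet K a b c

/-- The values `x, y, z` can be arranged into a strong `K`-triangle triplet. -/
def FormsStrongTriangleTriplet (K x y z : ℝ) : Prop :=
  ∃ a b c : ℝ, ({a, b, c} : Multiset ℝ) = ({x, y, z} : Multiset ℝ) ∧
    IsStrongTriangleTriplet K a b c

/-!
(⇐) Closing up a chain `x₀, …, xₙ` gives a cycle whose `n + 1` edge lengths form a `K`-relaxed
polygon: reading the chain around the cycle starting right after any given edge, the `K`-rpi bounds
that edge by `K` times the sum of the others. Applying the hypothesis on `f` to this polygon and
looking at the closing edge gives the `K₂`-rpi for `f ∘ d`.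

(⇒) Every `K₁`-relaxed polygon with positive sides is realized as a cycle: place its vertices at
the partial sums of the sides on a circle whose length is the perimeter, and let the distance be
the maximum of the arc distance and, for adjacent vertices, the side between them. Relaxedness
makes each side at most `K₁` times the arc distance, so this is `K₁`-rpi. All these cycles glue
into a single space, and the `K'` that `f` gives for it bounds every side of every polygon after
applying `f`.
-/

open Finset

lemma AddCircle.norm_coe_eq_min {p x : ℝ} (hx : 0 ≤ x) (hxp : x ≤ p) :
    ‖(x : AddCircle p)‖ = min x (p - x) := by
  rcases hxp.eq_or_lt with rfl | hxp
  · simp [coe_period, hx]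
  have hp : p ≠ 0 := by linarith
  rcases le_total x (p / 2) with h | h
  · rw [(norm_coe_eq_abs_iff p hp).2 (by rwa [abs_of_nonneg hx, abs_of_pos (by linarith)]),
      abs_of_nonneg hx, min_eq_left (by linarith)]
  · rw [← sub_zero (x : AddCircle p), ← coe_period p, ← coe_sub,
      (norm_coe_eq_abs_iff p hp).2
        (by rw [abs_of_neg (by linarith), abs_of_pos (by linarith)]; linarith),
      abs_of_neg (by linarith), min_eq_right (by linarith)]
    ring

lemma List.sum_range_getD {α M : Type*} [AddCommMonoid M] (l : List α) (d : α) (g : α → M) :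
    ∑ i ∈ Finset.range l.length, g (l.getD i d) = (l.map g).sum := by
  induction l with
  | nil => simp
  | cons x l ih =>
    simp only [length_cons, Finset.sum_range_succ', getD_cons_succ, getD_cons_zero, ih, map_cons,
      sum_cons, add_comm]

open Fin.NatCast in
lemma Fin.sum_univ_eq_sum_range_add_left {M : Type*} [AddCommMonoid M] {m : ℕ}
    (e : Fin (m + 1) → M) (j : Fin (m + 1)) :
    ∑ k, e k = ∑ i ∈ range (m + 1), e (j + i) := by
  rw [← Equiv.sum_comp (Equiv.addLeft j) e,
    ← Fin.sum_univ_eq_sum_range (fun i => e (j + (i : Fin (m + 1))))]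
  simp

def IsRelaxedPolygon {ι : Type*} (K : ℝ) (s : Finset ι) (a : ι → ℝ) : Prop :=
  ∀ j ∈ s, (1 + K) * a j ≤ K * ∑ i ∈ s, a i

lemma IsRelaxedPolygon.of_fin {K : ℝ} {m : ℕ} {a : ℕ → ℝ}
    (h : IsRelaxedPolygon K (univ : Finset (Fin m)) fun k => a (k + 1)) :
    IsRelaxedPolygon K (Icc 1 m) a := by
  have hsum : ∑ i ∈ Icc 1 m, a i = ∑ k : Fin m, a (k + 1) := by
    rw [Fin.sum_univ_eq_sum_range (fun i => a (i + 1)), range_eq_Ico, sum_Ico_add',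
      Ico_add_one_right_eq_Icc]
  intro j hj
  obtain ⟨hj1, hjm⟩ := mem_Icc.1 hj
  have := h ⟨j - 1, by omega⟩ (mem_univ _)
  rw [hsum]
  simpa only [Nat.sub_add_cancel hj1] using this

lemma isSemimetricOn_of_dist_le {α : Type} {β : Type*} [MetricSpace β] {X : Set α}
    {D : α → α → ℝ} {φ : α → β} (hφ : Set.InjOn φ X)
    (hD : ∀ x ∈ X, ∀ y ∈ X, dist (φ x) (φ y) ≤ D x y) (hself : ∀ x ∈ X, D x x = 0)
    (hsymm : ∀ x ∈ X, ∀ y ∈ X, D x y = D y x) : IsSemimetricOn X D := by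
  refine ⟨fun x hx y hy => dist_nonneg.trans (hD x hx y hy), fun x hx y hy => ⟨fun h => ?_, ?_⟩,
    hsymm⟩
  · exact hφ hx hy (dist_le_zero.1 (h ▸ hD x hx y hy))
  · rintro rfl
    exact hself x hx

lemma satisfiesRPI_of_dist_le {α : Type} {β : Type*} [PseudoMetricSpace β] {X : Set α}
    {D : α → α → ℝ} {K : ℝ} (φ : α → β) (hK : 0 ≤ K)
    (hD : ∀ x ∈ X, ∀ y ∈ X, dist (φ x) (φ y) ≤ D x y)
    (hDK : ∀ x ∈ X, ∀ y ∈ X, D x y ≤ K * dist (φ x) (φ y)) : SatisfiesRPI X D K := by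
  intro n x hx
  calc D (x 0) (x n) ≤ K * dist (φ (x 0)) (φ (x n)) := hDK _ (hx 0 n.zero_le) _ (hx n le_rfl)
    _ ≤ K * ∑ i ∈ range n, dist (φ (x i)) (φ (x (i + 1))) := by
      gcongr
      exact dist_le_range_sum_dist (fun i => φ (x i)) n
    _ ≤ K * ∑ i ∈ range n, D (x i) (x (i + 1)) := by
      gcongr with i hi
      exact hD _ (hx i (by simp at hi; omega)) _ (hx (i + 1) (by simp at hi; omega))

lemma IsSemimetricOn.comp {α : Type} {X : Set α} {d : α → α → ℝ} {f : ℝ → ℝ}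
    (hd : IsSemimetricOn X d) (hf : ∀ x, 0 ≤ x → 0 ≤ f x)
    (hamen : ∀ x, 0 ≤ x → (f x = 0 ↔ x = 0)) : IsSemimetricOn X fun x y => f (d x y) := by
  obtain ⟨hnonneg, hzero, hsymm⟩ := hd
  refine ⟨fun x hx y hy => hf _ (hnonneg x hx y hy), fun x hx y hy => ?_,
    fun x hx y hy => congrArg f (hsymm x hx y hy)⟩
  rw [hamen _ (hnonneg x hx y hy), hzero x hx y hy]

open Fin.NatCast in
lemma SatisfiesRPI.isRelaxedPolygon_edges {α : Type} {X : Set α} {d : α → α → ℝ} {K : ℝ}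
    (hd : ∀ x ∈ X, ∀ y ∈ X, d x y = d y x) (h : SatisfiesRPI X d K) {m : ℕ}
    (p : Fin (m + 1) → α) (hp : ∀ k, p k ∈ X) :
    IsRelaxedPolygon K univ fun k => d (p k) (p (k + 1)) := by
  intro j _
  have hpath := h m (fun i => p (j + 1 + (i : Fin (m + 1)))) fun i _ => hp _
  have hsum := Fin.sum_univ_eq_sum_range_add_left (fun k => d (p k) (p (k + 1))) (j + 1)
  have hlast : j + 1 + Fin.last m = j := by
    rw [add_assoc, add_comm 1, Fin.last_add_one, add_zero]
  simp only [Nat.cast_zero, add_zero, Fin.natCast_eq_last, Nat.cast_succ, ← add_assoc, hlast]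
    at hpath
  rw [sum_range_succ, Fin.natCast_eq_last, hlast] at hsum
  rw [hd _ (hp _) _ (hp _)] at hpath
  dsimp only
  rw [hsum]
  linarith

lemma SatisfiesRPI.isRelaxedPolygon_chain {α : Type} {X : Set α} {d : α → α → ℝ} {K : ℝ}
    (hd : ∀ x ∈ X, ∀ y ∈ X, d x y = d y x) (h : SatisfiesRPI X d K) {n : ℕ} {x : ℕ → α}
    (hx : ∀ i ≤ n, x i ∈ X) :
    IsRelaxedPolygon K (Icc 1 (n + 1)) fun i => d (x (i - 1)) (x (i % (n + 1))) := by
  refine IsRelaxedPolygon.of_fin ?_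
  convert h.isRelaxedPolygon_edges hd (fun k => x k) fun k => hx _ (Fin.is_le k) using 3 with k
  · rw [Nat.add_sub_cancel]
  · rw [Fin.val_add, Fin.val_one', Nat.add_mod_mod]

lemma IsSemimetricOn.satisfiesRPI_comp {α : Type} {X : Set α} {d : α → α → ℝ} {K K₂ : ℝ}
    {f : ℝ → ℝ} (hd : IsSemimetricOn X d) (h : SatisfiesRPI X d K)
    (hf : ∀ (n : ℕ) (a : ℕ → ℝ), (∀ i ∈ Icc 1 n, 0 ≤ a i) → IsRelaxedPolygon K (Icc 1 n) a →
      IsRelaxedPolygon K₂ (Icc 1 n) fun i => f (a i)) :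
    SatisfiesRPI X (fun x y => f (d x y)) K₂ := by
  intro n x hx
  have hx' : ∀ i ∈ Icc 1 (n + 1), x (i - 1) ∈ X ∧ x (i % (n + 1)) ∈ X := fun i hi =>
    ⟨hx _ (by simp at hi; omega), hx _ (Nat.le_of_lt_succ (Nat.mod_lt _ n.succ_pos))⟩
  have hpoly := hf (n + 1) _ (fun i hi => hd.1 _ (hx' i hi).1 _ (hx' i hi).2)
    (h.isRelaxedPolygon_chain hd.2.2 hx) (n + 1) (by simp)
  have hsum : ∑ i ∈ Icc 1 n, f (d (x (i - 1)) (x (i % (n + 1))))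
      = ∑ i ∈ range n, f (d (x i) (x (i + 1))) := by
    rw [← Ico_add_one_right_eq_Icc, sum_Ico_eq_sum_range, Nat.add_sub_cancel]
    refine sum_congr rfl fun i hi => ?_
    rw [Nat.mod_eq_of_lt (by simp at hi; omega), add_comm 1 i, Nat.add_sub_cancel]
  simp only [sum_Icc_succ_top (Nat.le_add_left 1 n), Nat.add_sub_cancel, Nat.mod_self, hsum]
    at hpoly
  change f (d (x 0) (x n)) ≤ _
  rw [hd.2.2 _ (hx 0 n.zero_le) _ (hx n le_rfl)]
  linarith

structure RelaxedCycle (K : ℝ) : Type where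
  sides : List ℝ
  three_le_length : 3 ≤ sides.length
  pos : ∀ x ∈ sides, 0 < x
  relaxed : ∀ x ∈ sides, (1 + K) * x ≤ K * sides.sum

namespace RelaxedCycle

variable {K : ℝ} (c : RelaxedCycle K)

def side (i : ℕ) : ℝ := c.sides.getD i 0

def vertex (i : ℕ) : ℝ := ∑ k ∈ range i, c.side k

def next (i : ℕ) : ℕ := if i + 1 = c.sides.length then 0 else i + 1

variable {c} in
lemma side_mem {i : ℕ} (hi : i < c.sides.length) : c.side i ∈ c.sides := by
  rw [side, List.getD_eq_getElem _ _ hi]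
  exact List.getElem_mem hi

lemma side_nonneg (i : ℕ) : 0 ≤ c.side i := by
  rcases lt_or_ge i c.sides.length with hi | hi
  · exact (c.pos _ (side_mem hi)).le
  · rw [side, List.getD_eq_default _ _ hi]

lemma vertex_succ (i : ℕ) : c.vertex (i + 1) = c.vertex i + c.side i := sum_range_succ _ _

lemma vertex_length : c.vertex c.sides.length = c.sides.sum :=
  (List.sum_range_getD c.sides 0 id).trans (congrArg List.sum (List.map_id _))

lemma vertex_nonneg (i : ℕ) : 0 ≤ c.vertex i := sum_nonneg fun k _ => c.side_nonneg k

lemma vertex_strictMonoOn : StrictMonoOn c.vertex (Set.Iic c.sides.length) := by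
  intro u _ v hv huv
  have hpos : 0 < ∑ k ∈ Ico u v, c.side k :=
    sum_pos (fun k hk => c.pos _ (side_mem (by simp at hk hv; omega))) ⟨u, by simp [huv]⟩
  rw [vertex, vertex, ← sum_range_add_sum_Ico _ huv.le]
  linarith

lemma sum_sides_pos : 0 < c.sides.sum := by
  rw [← vertex_length]
  exact (c.vertex_nonneg 0).trans_lt
    (c.vertex_strictMonoOn (by simp) Set.self_mem_Iic (by have := c.three_le_length; omega))

lemma side_le_sum {i : ℕ} (hi : i < c.sides.length) : c.side i ≤ c.sides.sum := by
  rw [← vertex_length]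
  calc c.side i ≤ c.vertex i + c.side i := le_add_of_nonneg_left (c.vertex_nonneg i)
    _ = c.vertex (i + 1) := (c.vertex_succ i).symm
    _ ≤ c.vertex c.sides.length :=
      c.vertex_strictMonoOn.monotoneOn (by simp; omega) Set.self_mem_Iic (by omega)

lemma next_ne (i : ℕ) : c.next i ≠ i := by
  have := c.three_le_length
  unfold next
  split_ifs <;> omega

lemma next_next_ne (i : ℕ) : c.next (c.next i) ≠ i := by
  have := c.three_le_length
  unfold next
  split_ifs <;> omega

lemma coe_vertex_next (i : ℕ) :
    (c.vertex (c.next i) : AddCircle c.sides.sum) = c.vertex i + c.side i := by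
  rw [← AddCircle.coe_add, ← vertex_succ, next]
  split_ifs with h
  · rw [h, vertex_length, AddCircle.coe_period, vertex, range_zero, sum_empty, AddCircle.coe_zero]
  · rfl

lemma side_le_mul_norm (hK : 1 ≤ K) {i : ℕ} (hi : i < c.sides.length) :
    c.side i ≤ K * ‖(c.side i : AddCircle c.sides.sum)‖ := by
  have hrel := c.relaxed _ (side_mem hi)
  rw [AddCircle.norm_coe_eq_min (c.side_nonneg i) (c.side_le_sum hi),
    mul_min_of_nonneg _ _ (by linarith)]
  exact le_min (le_mul_of_one_le_left (c.side_nonneg i) hK) (by rw [mul_sub]; linarith)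

attribute [local instance] Metric.Sigma.metricSpace

noncomputable def toCircle (z : RelaxedCycle K × ℕ) : Σ c : RelaxedCycle K, AddCircle c.sides.sum :=
  ⟨z.1, z.1.vertex z.2⟩

def vertexSet (K : ℝ) : Set (RelaxedCycle K × ℕ) := {z | z.2 < z.1.sides.length}

open Classical in
noncomputable def edgeLength (z w : RelaxedCycle K × ℕ) : ℝ :=
  if z.1 = w.1 ∧ w.2 = z.1.next z.2 then z.1.side z.2 else 0

/-- Taking the maximum with `edgeLength` puts adjacent vertices exactly one side apart, also when
that side is longer than half the perimeter. -/
noncomputable def cycleDist (z w : RelaxedCycle K × ℕ) : ℝ :=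
  max (dist (toCircle z) (toCircle w)) (max (edgeLength z w) (edgeLength w z))

lemma dist_toCircle_next (i : ℕ) :
    dist (toCircle (c, i)) (toCircle (c, c.next i)) = ‖(c.side i : AddCircle c.sides.sum)‖ := by
  rw [toCircle, toCircle, Metric.Sigma.dist_same, dist_comm, dist_eq_norm, coe_vertex_next,
    add_sub_cancel_left]

lemma injOn_toCircle : Set.InjOn toCircle (vertexSet K) := by
  rintro ⟨c, u⟩ hu ⟨c', v⟩ hv h
  obtain ⟨rfl, h⟩ := Sigma.mk.inj_iff.1 h
  have : Fact (0 < c.sides.sum) := ⟨c.sum_sides_pos⟩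
  have hmem : ∀ i < c.sides.length, c.vertex i ∈ Set.Ico 0 (0 + c.sides.sum) := fun i hi =>
    ⟨c.vertex_nonneg i, by
      rw [zero_add, ← vertex_length]
      exact c.vertex_strictMonoOn hi.le Set.self_mem_Iic hi⟩
  have := (AddCircle.coe_eq_coe_iff_of_mem_Ico (hmem u hu) (hmem v hv)).1 (eq_of_heq h)
  exact Prod.ext rfl (c.vertex_strictMonoOn.injOn (Set.mem_Iic.2 hu.le) (Set.mem_Iic.2 hv.le) this)

lemma edgeLength_le (hK : 1 ≤ K) {z : RelaxedCycle K × ℕ} (hz : z ∈ vertexSet K)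
    (w : RelaxedCycle K × ℕ) : edgeLength z w ≤ K * dist (toCircle z) (toCircle w) := by
  obtain ⟨c, i⟩ := z
  obtain ⟨c', j⟩ := w
  rw [edgeLength]
  split_ifs with h
  · obtain ⟨rfl, rfl⟩ := h
    rw [dist_toCircle_next]
    exact c.side_le_mul_norm hK hz
  · exact mul_nonneg (by linarith) dist_nonneg

lemma cycleDist_comm (z w : RelaxedCycle K × ℕ) : cycleDist z w = cycleDist w z := by
  rw [cycleDist, cycleDist, dist_comm, max_comm (edgeLength z w)]

lemma cycleDist_self (z : RelaxedCycle K × ℕ) : cycleDist z z = 0 := by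
  rw [cycleDist, dist_self, edgeLength, if_neg fun h => z.1.next_ne z.2 h.2.symm, max_self,
    max_self]

lemma cycleDist_next {i : ℕ} (hi : i < c.sides.length) :
    cycleDist (c, i) (c, c.next i) = c.side i := by
  have hfwd : edgeLength (c, i) (c, c.next i) = c.side i := if_pos ⟨rfl, rfl⟩
  have hbwd : edgeLength (c, c.next i) (c, i) = 0 := if_neg fun h => c.next_next_ne i h.2.symm
  have hdist : dist (toCircle (c, i)) (toCircle (c, c.next i)) ≤ c.side i := by
    rw [dist_toCircle_next, AddCircle.norm_coe_eq_min (c.side_nonneg i) (c.side_le_sum hi)]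
    exact min_le_left _ _
  rw [cycleDist, hfwd, hbwd, max_eq_left (c.side_nonneg i), max_eq_right hdist]

lemma isSemimetricOn_cycleDist : IsSemimetricOn (vertexSet K) cycleDist :=
  isSemimetricOn_of_dist_le injOn_toCircle (fun _ _ _ _ => le_max_left _ _)
    (fun z _ => cycleDist_self z) fun z _ w _ => cycleDist_comm z w

lemma satisfiesRPI_cycleDist (hK : 1 ≤ K) : SatisfiesRPI (vertexSet K) cycleDist K :=
  satisfiesRPI_of_dist_le toCircle (by linarith) (fun _ _ _ _ => le_max_left _ _)
    fun z hz w hw => max_le (le_mul_of_one_le_left dist_nonneg hK)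
      (max_le (edgeLength_le hK hz w) (dist_comm (toCircle z) _ ▸ edgeLength_le hK hw z))

lemma vertexSet_nonempty (hK : 1 ≤ 2 * K) : (vertexSet K).Nonempty := by
  refine ⟨(⟨[1, 1, 1], le_rfl, by simp, ?_⟩, 0), by simp [vertexSet]⟩
  norm_num
  linarith

lemma le_mul_sum_of_satisfiesRPI {f : ℝ → ℝ} {K' : ℝ}
    (h : SatisfiesRPI (vertexSet K) (fun z w => f (cycleDist z w)) K')
    {l : List ℝ} {x : ℝ} (hc : c.sides = l ++ [x]) : f x ≤ K' * (l.map f).sum := by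
  have hlen : c.sides.length = l.length + 1 := by simp [hc]
  have hpath := h l.length (fun i => (c, i)) fun i hi => show i < c.sides.length by omega
  have hlast : c.next l.length = 0 := if_pos hlen.symm
  have hside : ∀ i, c.side i = (l ++ [x]).getD i 0 := fun i => by rw [side, hc]
  have hsum : ∑ i ∈ range l.length, f (cycleDist (c, i) (c, i + 1)) = (l.map f).sum := by
    rw [← List.sum_range_getD l 0 f]
    refine sum_congr rfl fun i hi => ?_
    have hi : i < l.length := mem_range.1 hi
    have hnext : c.next i = i + 1 := if_neg (by omega)
    rw [← hnext, cycleDist_next c (by omega), hside, List.getD_append _ _ _ _ hi]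
  dsimp only at hpath
  rwa [cycleDist_comm, ← hlast, cycleDist_next c (by omega), hside,
    List.getD_append_right _ _ _ _ le_rfl, Nat.sub_self, hsum] at hpath

end RelaxedCycle

/-- Zero sides are dropped; doubling the remaining ones keeps the polygon relaxed and guarantees
at least three sides, at the price of a factor `2` in the conclusion. -/
lemma IsRelaxedPolygon.exists_relaxedCycle {ι : Type*} [DecidableEq ι] {K : ℝ} (hK : 1 ≤ K)
    {s : Finset ι} {a : ι → ℝ} (ha : ∀ i ∈ s, 0 ≤ a i) (h : IsRelaxedPolygon K s a) {j : ι}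
    (hj : j ∈ s) (haj : 0 < a j) :
    ∃ t ⊆ s.erase j, ∃ c : RelaxedCycle K,
      c.sides = t.toList.map a ++ t.toList.map a ++ [a j] := by
  set t := (s.erase j).filter fun i => 0 < a i
  set l := t.toList.map a
  have hl : l.sum = ∑ i ∈ s.erase j, a i := by
    rw [sum_map_toList]
    exact sum_filter_of_ne fun i hi hne => (ha i (mem_of_mem_erase hi)).lt_of_ne hne.symm
  have hajl : a j ≤ K * l.sum := by
    have := h j hj
    rw [← add_sum_erase _ _ hj] at this
    rw [hl]
    linarith
  have hmem : ∀ y ∈ l, 0 < y ∧ y ≤ l.sum := by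
    simp only [l, List.mem_map, mem_toList]
    rintro _ ⟨i, hi, rfl⟩
    refine ⟨(mem_filter.1 hi).2, ?_⟩
    rw [sum_map_toList]
    exact single_le_sum (fun k hk => (mem_filter.1 hk).2.le) hi
  have hne : l ≠ [] := by
    rintro hnil
    rw [hnil, List.sum_nil, mul_zero] at hajl
    linarith
  refine ⟨t, filter_subset _ _, ⟨l ++ l ++ [a j], ?_, ?_, ?_⟩, rfl⟩
  · have := List.length_pos_of_ne_nil hne
    simp only [List.length_append, List.length_singleton]
    omega
  · simp only [List.mem_append, or_self, List.mem_singleton]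
    rintro y (hy | rfl)
    exacts [(hmem y hy).1, haj]
  · simp only [List.mem_append, or_self, List.mem_singleton, List.sum_append, List.sum_singleton]
    have hKl : l.sum ≤ K * l.sum :=
      le_mul_of_one_le_left (List.sum_nonneg fun y hy => (hmem y hy).1.le) hK
    rintro y (hy | rfl)
    · obtain ⟨hy0, hyl⟩ := hmem y hy
      nlinarith
    · linarith

lemma IsRelaxedPolygon.comp_of_relaxedCycle {ι : Type*} [DecidableEq ι] {f : ℝ → ℝ} {K K' : ℝ}
    (hf : ∀ x, 0 ≤ x → 0 ≤ f x) (hf0 : f 0 = 0) (hK : 1 ≤ K) (hK' : 0 ≤ K')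
    (hcyc : ∀ (c : RelaxedCycle K) (l : List ℝ) (x : ℝ), c.sides = l ++ [x] →
      f x ≤ K' * (l.map f).sum)
    {s : Finset ι} {a : ι → ℝ} (ha : ∀ i ∈ s, 0 ≤ a i) (h : IsRelaxedPolygon K s a) :
    IsRelaxedPolygon (2 * K') s fun i => f (a i) := by
  intro j hj
  have hfa : ∀ i ∈ s.erase j, 0 ≤ f (a i) := fun i hi => hf _ (ha i (mem_of_mem_erase hi))
  suffices f (a j) ≤ 2 * K' * ∑ i ∈ s.erase j, f (a i) by
    rw [← add_sum_erase _ _ hj]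
    linarith
  rcases (ha j hj).eq_or_lt with h0 | hpos
  · rw [← h0, hf0]
    exact mul_nonneg (by linarith) (sum_nonneg hfa)
  obtain ⟨t, hts, c, hc⟩ := h.exists_relaxedCycle hK ha hj hpos
  calc f (a j) ≤ K' * ((t.toList.map a ++ t.toList.map a).map f).sum := hcyc c _ _ hc
    _ = 2 * K' * ∑ i ∈ t, f (a i) := by
      rw [List.map_append, List.sum_append, List.map_map, sum_map_toList, Function.comp_def]
      ring
    _ ≤ 2 * K' * ∑ i ∈ s.erase j, f (a i) :=
      mul_le_mul_of_nonneg_left (sum_le_sum_of_subset_of_nonneg hts fun i hi _ => hfa i hi)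
        (by linarith)

/-- Characterization of (P)-preserving mappings via relaxed
polygons. -/
theorem P_preserving_characterization (f : ℝ → ℝ)
    (hf : ∀ x : ℝ, 0 ≤ x → 0 ≤ f x)
    (hamen : ∀ x : ℝ, 0 ≤ x → (f x = 0 ↔ x = 0)) :
    (∀ (α : Type) (X : Set α) (d : α → α → ℝ), X.Nonempty →
        IsSemimetricOn X d → (∃ K : ℝ, 1 ≤ K ∧ SatisfiesRPI X d K) →
          IsSemimetricOn X (fun x y => f (d x y)) ∧
          ∃ K' : ℝ, 1 ≤ K' ∧ SatisfiesRPI X (fun x y => f (d x y)) K') ↔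
    (∀ K₁ : ℝ, 1 ≤ K₁ → ∃ K₂ : ℝ, 1 ≤ K₂ ∧
      ∀ (n : ℕ) (a : ℕ → ℝ), (∀ i ∈ Finset.Icc 1 n, 0 ≤ a i) →
        (∀ j ∈ Finset.Icc 1 n, (1 + K₁) * a j ≤ K₁ * ∑ i ∈ Finset.Icc 1 n, a i) →
        (∀ j ∈ Finset.Icc 1 n, (1 + K₂) * f (a j) ≤ K₂ * ∑ i ∈ Finset.Icc 1 n, f (a i))) := by
  constructor
  · intro hP K₁ hK₁
    obtain ⟨-, K', hK', hrpi⟩ := hP _ (RelaxedCycle.vertexSet K₁) RelaxedCycle.cycleDist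
      (RelaxedCycle.vertexSet_nonempty (by linarith)) RelaxedCycle.isSemimetricOn_cycleDist
      ⟨K₁, hK₁, RelaxedCycle.satisfiesRPI_cycleDist hK₁⟩
    exact ⟨2 * K', by linarith, fun n a ha => IsRelaxedPolygon.comp_of_relaxedCycle hf
      ((hamen 0 le_rfl).2 rfl) hK₁ (by linarith)
      (fun c _ _ hc => c.le_mul_sum_of_satisfiesRPI hrpi hc) ha⟩
  · intro hpoly α X d _ hd ⟨K, hK, hrpi⟩
    obtain ⟨K₂, hK₂, hpres⟩ := hpoly K hK
    exact ⟨hd.comp hf hamen, K₂, hK₂, hd.satisfiesRPI_comp hrpi hpres⟩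
end

section
/- Let f : [0,∞) → [0,∞) and suppose there exist real numbers a, b with 0 < a ≤ b such that a·x ≤ f(x) ≤ b·x for all x ≥ 0. Then f is (P)-preserving: for every semimetric space (X,d) satisfying the K-relaxed polygonal inequality for some K ≥ 1, the function f∘d is a semimetric on X and (X, f∘d) satisfies the K′-relaxed polygonal inequality for some K′ ≥ 1. -/
/-- A function squeezed between two linear functions is
(P)-preserving. -/
theorem linear_bounds_imply_P_preserving (f : ℝ → ℝ) (a b : ℝ)
    (ha : 0 < a) (hab : a ≤ b)
    (hbound : ∀ x : ℝ, 0 ≤ x → a * x ≤ f x ∧ f x ≤ b * x) :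
    ∀ (α : Type) (X : Set α) (d : α → α → ℝ), X.Nonempty →
      IsSemimetricOn X d → (∃ K : ℝ, 1 ≤ K ∧ SatisfiesRPI X d K) →
        IsSemimetricOn X (fun x y => f (d x y)) ∧
        ∃ K' : ℝ, 1 ≤ K' ∧ SatisfiesRPI X (fun x y => f (d x y)) K' := by
  intro α X d _ hsemi ⟨K, hK, hrpi⟩
  obtain ⟨hnn, hzero, hsymm⟩ := hsemi
  have hfnn : ∀ x ∈ X, ∀ y ∈ X, 0 ≤ f (d x y) := by
    intro x hx y hy
    have h0 := hnn x hx y hy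
    have := (hbound _ h0).1
    nlinarith
  constructor
  · refine ⟨hfnn, ?_, ?_⟩
    · intro x hx y hy
      constructor
      · intro hf
        have h0 := hnn x hx y hy
        have h1 := (hbound _ h0).1
        have : d x y = 0 := by nlinarith
        exact (hzero x hx y hy).1 this
      · intro hxy
        have : d x y = 0 := (hzero x hx y hy).2 hxy
        show f (d x y) = 0
        rw [this]
        have h1 := (hbound 0 le_rfl).1
        have h2 := (hbound 0 le_rfl).2
        linarith [h1, h2]
    · intro x hx y hy
      simp only [hsymm x hx y hy]
  · refine ⟨b / a * K, ?_, ?_⟩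
    · have : 1 ≤ b / a := (one_le_div ha).2 hab
      calc (1:ℝ) = 1 * 1 := by ring
      _ ≤ b / a * K := by apply mul_le_mul this hK zero_le_one; linarith
    · intro n x hx
      have hx0 : x 0 ∈ X := hx 0 (Nat.zero_le n)
      have hxn : x n ∈ X := hx n le_rfl
      have h0 := hnn _ hx0 _ hxn
      have hsum : ∑ i ∈ Finset.range n, d (x i) (x (i+1)) ≤
          (1/a) * ∑ i ∈ Finset.range n, f (d (x i) (x (i+1))) := by
        rw [Finset.mul_sum]
        apply Finset.sum_le_sum
        intro i hi
        have hi' : i < n := Finset.mem_range.1 hi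
        have hdi := hnn _ (hx i hi'.le) _ (hx (i+1) hi')
        have h1 := (hbound _ hdi).1
        rw [one_div_mul_eq_div, le_div_iff₀ ha]
        linarith [mul_comm (d (x i) (x (i+1))) a]
      have hb : (0:ℝ) ≤ b := le_trans ha.le hab
      have hK0 : (0:ℝ) ≤ K := le_trans zero_le_one hK
      have hfb := (hbound _ h0).2
      have hr := hrpi n x hx
      calc f (d (x 0) (x n)) ≤ b * d (x 0) (x n) := hfb
        _ ≤ b * (K * ∑ i ∈ Finset.range n, d (x i) (x (i+1))) :=
            mul_le_mul_of_nonneg_left hr hb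
        _ ≤ b * (K * ((1/a) * ∑ i ∈ Finset.range n, f (d (x i) (x (i+1))))) :=
            mul_le_mul_of_nonneg_left (mul_le_mul_of_nonneg_left hsum hK0) hb
        _ = b / a * K * ∑ i ∈ Finset.range n, f (d (x i) (x (i+1))) := by ring
end
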